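/- arXiv:1110.0253 — 4 statements merged into one kernel-verified Lean document; each statement's English description precedes it below -/
import Mathlib

section
/- For every real x > 0, one has ∫_1^∞ exp(−(x/2)(y + 1/y)) · y^{−1} dy < √(π/(2x)) · e^{−x}. -/
open MeasureTheory Real Set Filter Topology

/-!
Substituting `t = √y - 1/√y` turns `(x/2)(y + 1/y)` into `x + (x/2) t²`, and
`dt = (y + 1) / (2 y √y) dy`, which strictly exceeds `dy / y` for `y > 1` because `y + 1 > 2 √y`.
Hence the integral is strictly less than `e^{-x} ∫_0^∞ e^{-(x/2) t²} dt = e^{-x} √(π/(2x))`.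
-/

theorem setIntegral_lt_setIntegral_of_forall_lt {X : Type*} [MeasurableSpace X] {μ : Measure X}
    {s : Set X} {f g : X → ℝ} (hs : MeasurableSet s) (hμs : μ s ≠ 0)
    (hf : IntegrableOn f s μ) (hg : IntegrableOn g s μ) (hlt : ∀ x ∈ s, f x < g x) :
    ∫ x in s, f x ∂μ < ∫ x in s, g x ∂μ := by
  rw [← sub_pos, ← integral_sub hg hf]
  change 0 < ∫ x in s, (g - f) x ∂μ
  rw [setIntegral_pos_iff_support_of_nonneg_ae _ (hg.sub hf)]
  · have hsupp : s ⊆ Function.support (g - f) := fun x hx => (sub_pos.2 (hlt x hx)).ne'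
    rwa [inter_eq_right.2 hsupp, pos_iff_ne_zero]
  · filter_upwards [ae_restrict_mem hs] with x hx
    exact (sub_pos.2 (hlt x hx)).le

section ChangeOfVariables

variable {g φ φ' : ℝ → ℝ} {a : ℝ}

theorem hasDerivAt_intervalIntegral_comp (hg : Continuous g) (b : ℝ) {y : ℝ}
    (hφ : HasDerivAt φ (φ' y) y) :
    HasDerivAt (fun y => ∫ t in b..φ y, g t) (g (φ y) * φ' y) y :=
  (intervalIntegral.integral_hasDerivAt_right (hg.intervalIntegrable _ _)
    hg.aestronglyMeasurable.stronglyMeasurableAtFilter hg.continuousAt).comp y hφ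

theorem integral_Ioi_comp_mul_deriv_of_nonneg (hg : Continuous g) (hg_nonneg : 0 ≤ g)
    (hgi : IntegrableOn g (Ioi (φ a))) (hφ : ∀ y ∈ Ici a, HasDerivAt φ (φ' y) y)
    (hφ' : ∀ y ∈ Ioi a, 0 ≤ φ' y) (hφ_top : Tendsto φ atTop atTop) :
    ∫ y in Ioi a, g (φ y) * φ' y = ∫ t in Ioi (φ a), g t := by
  rw [integral_Ioi_of_hasDerivAt_of_nonneg'
    (fun y hy => hasDerivAt_intervalIntegral_comp hg (φ a) (hφ y hy))
    (fun y hy => mul_nonneg (hg_nonneg _) (hφ' y hy))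
    (intervalIntegral_tendsto_integral_Ioi _ hgi hφ_top)]
  simp

end ChangeOfVariables

theorem sqrt_sub_inv_sqrt_sq {y : ℝ} (hy : 0 < y) : (√y - (√y)⁻¹) ^ 2 = y + 1 / y - 2 := by
  have hsy : √y ≠ 0 := (sqrt_pos.2 hy).ne'
  rw [sub_sq, inv_pow, sq_sqrt hy.le, mul_assoc, mul_inv_cancel₀ hsy]
  ring

theorem hasDerivAt_sqrt_sub_inv_sqrt {y : ℝ} (hy : 0 < y) :
    HasDerivAt (fun y => √y - (√y)⁻¹) ((y + 1) / (2 * y * √y)) y := by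
  have hsy : 0 < √y := sqrt_pos.2 hy
  have hsqrt : HasDerivAt sqrt (1 / (2 * √y)) y := hasDerivAt_sqrt hy.ne'
  refine (hsqrt.sub (hsqrt.inv hsy.ne')).congr_deriv ?_
  rw [sq_sqrt hy.le]
  field_simp
  ring

theorem tendsto_sqrt_sub_inv_sqrt_atTop : Tendsto (fun y => √y - (√y)⁻¹) atTop atTop := by
  have hsqrt : Tendsto sqrt atTop atTop := tendsto_sqrt_atTop
  simpa [sub_eq_add_neg] using hsqrt.atTop_add (tendsto_inv_atTop_zero.comp hsqrt).neg

theorem inv_lt_add_one_div_two_mul_sqrt {y : ℝ} (hy : 0 < y) (hy₁ : y ≠ 1) :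
    y⁻¹ < (y + 1) / (2 * y * √y) := by
  have hsy : 0 < √y := sqrt_pos.2 hy
  have hsy₁ : √y ≠ 1 := by rwa [Ne, sqrt_eq_one]
  have hamgm : 2 * √y < y + 1 := by
    nlinarith [sq_sqrt hy.le, sq_pos_of_ne_zero (sub_ne_zero.2 hsy₁)]
  rw [inv_eq_one_div, div_lt_div_iff₀ hy (by positivity)]
  nlinarith

theorem exp_neg_mul_add_inv {x y : ℝ} (hy : 0 < y) :
    exp (-(x / 2) * (y + 1 / y)) = exp (-x) * exp (-(x / 2) * (√y - (√y)⁻¹) ^ 2) := by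
  rw [← exp_add, sqrt_sub_inv_sqrt_sq hy]
  ring_nf

theorem integral_Ioi_one_gaussian_sqrt_sub_inv_sqrt {x : ℝ} (hx : 0 < x) :
    ∫ y in Ioi 1, exp (-(x / 2) * (√y - (√y)⁻¹) ^ 2) * ((y + 1) / (2 * y * √y)) =
      √(π / (2 * x)) := by
  have hG : IntegrableOn (fun t => exp (-(x / 2) * t ^ 2)) (Ioi (√1 - (√1)⁻¹)) :=
    (integrable_exp_neg_mul_sq (by positivity)).integrableOn
  rw [integral_Ioi_comp_mul_deriv_of_nonneg (φ := fun y => √y - (√y)⁻¹) (by fun_prop)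
    (fun t => (exp_pos _).le) hG
    (fun y hy => hasDerivAt_sqrt_sub_inv_sqrt (zero_lt_one.trans_le hy))
    (fun y hy => by have : 0 < y := zero_lt_one.trans hy; positivity)
    tendsto_sqrt_sub_inv_sqrt_atTop]
  rw [sqrt_one, inv_one, sub_self, integral_gaussian_Ioi,
    show π / (x / 2) = 2 ^ 2 * (π / (2 * x)) by field_simp, sqrt_mul (by positivity),
    sqrt_sq zero_le_two]
  ring

theorem integrableOn_Ioi_one_gaussian_sqrt_sub_inv_sqrt {x : ℝ} (hx : 0 < x) :
    IntegrableOn (fun y => exp (-(x / 2) * (√y - (√y)⁻¹) ^ 2) * ((y + 1) / (2 * y * √y)))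
      (Ioi 1) :=
  Integrable.of_integral_ne_zero <| by
    rw [integral_Ioi_one_gaussian_sqrt_sub_inv_sqrt hx]
    exact (sqrt_pos.2 (by positivity)).ne'

/-- For every real `x > 0`,
`∫_1^∞ exp(−(x/2)(y + 1/y)) · y⁻¹ dy < √(π/(2x)) · e^{−x}`. -/
theorem k_bessel_zero_bound (x : ℝ) (hx : 0 < x) :
    (∫ y in Set.Ioi (1 : ℝ), Real.exp (-(x / 2) * (y + 1 / y)) * y⁻¹) <
      Real.sqrt (Real.pi / (2 * x)) * Real.exp (-x) := by
  set g : ℝ → ℝ := fun y => exp (-(x / 2) * (√y - (√y)⁻¹) ^ 2) * ((y + 1) / (2 * y * √y))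
  have hgi : IntegrableOn (fun y => exp (-x) * g y) (Ioi 1) :=
    (integrableOn_Ioi_one_gaussian_sqrt_sub_inv_sqrt hx).const_mul _
  have hlt : ∀ y ∈ Ioi (1 : ℝ), exp (-(x / 2) * (y + 1 / y)) * y⁻¹ < exp (-x) * g y :=
    fun y (hy : 1 < y) => by
      rw [exp_neg_mul_add_inv (zero_lt_one.trans hy), mul_assoc]
      simp only [g]
      gcongr
      exact inv_lt_add_one_div_two_mul_sqrt (zero_lt_one.trans hy) hy.ne'
  have hfi : IntegrableOn (fun y => exp (-(x / 2) * (y + 1 / y)) * y⁻¹) (Ioi 1) :=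
    hgi.mono' (by fun_prop) <| by
      filter_upwards [ae_restrict_mem measurableSet_Ioi] with y (hy : 1 < y)
      rw [norm_of_nonneg (by have : 0 < y := zero_lt_one.trans hy; positivity)]
      exact (hlt y hy).le
  calc ∫ y in Ioi 1, exp (-(x / 2) * (y + 1 / y)) * y⁻¹
      < ∫ y in Ioi 1, exp (-x) * g y :=
        setIntegral_lt_setIntegral_of_forall_lt measurableSet_Ioi (by simp) hfi hgi hlt
    _ = √(π / (2 * x)) * exp (-x) := by
      rw [integral_const_mul, integral_Ioi_one_gaussian_sqrt_sub_inv_sqrt hx, mul_comm]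
end

section
/- For every real z > 0 and every real w, the series Σ_{j=0}^∞ w^j / (z(z+1)⋯(z+j)) converges and ∫_0^1 t^{z−1} e^{−wt} dt = e^{−w} · Σ_{j=0}^∞ w^j / (z(z+1)⋯(z+j)). -/
/-!
Writing `e^{-wt} = e^{-w} e^{w(1-t)}` and expanding `e^{w(1-t)}` in its power series, the
`k`-th term integrates to `w^k/k!` times the Beta integral `B(z, k+1) = k!/(z(z+1)⋯(z+k))`.
The interchange of sum and integral is justified because the same computation with `|w|` in
place of `w` bounds the integrals of the absolute values by a convergent series.
-/

open MeasureTheory Real Finset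
open scoped Nat

section
variable {z : ℝ}

lemma mul_factorial_le_prod_range_add (hz : 0 ≤ z) (j : ℕ) :
    z * j ! ≤ ∏ i ∈ range (j + 1), (z + i) := by
  rw [prod_range_succ', Nat.cast_zero, add_zero, mul_comm, ← prod_range_add_one_eq_factorial]
  push_cast
  gcongr ?_ * _
  exact prod_le_prod (fun i _ => by positivity) fun i _ => by linarith

lemma summable_pow_div_prod_range_add (hz : 0 < z) (w : ℝ) :
    Summable fun j : ℕ => w ^ j / ∏ i ∈ range (j + 1), (z + i) := by
  refine .of_norm_bounded ((summable_pow_div_factorial |w|).mul_left z⁻¹) fun j => ?_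
  have hpos : 0 < z * j ! := by positivity
  have hle := mul_factorial_le_prod_range_add hz.le j
  calc ‖w ^ j / ∏ i ∈ range (j + 1), (z + i)‖
      = |w| ^ j / ∏ i ∈ range (j + 1), (z + i) := by
        rw [norm_div, norm_pow, norm_eq_abs, norm_of_nonneg (hpos.le.trans hle)]
    _ ≤ |w| ^ j / (z * j !) := div_le_div_of_nonneg_left (by positivity) hpos hle
    _ = z⁻¹ * (|w| ^ j / j !) := by field_simp

lemma integral_rpow_mul_one_sub_pow (hz : 0 < z) (k : ℕ) :
    ∫ t in Set.Ioo (0 : ℝ) 1, t ^ (z - 1) * (1 - t) ^ k =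
      k ! / ∏ i ∈ range (k + 1), (z + i) := by
  have hbeta := Complex.betaIntegral_eval_nat_add_one_right (u := z) (by simpa using hz) k
  rw [← integral_Ioc_eq_integral_Ioo, ← intervalIntegral.integral_of_le zero_le_one]
  apply Complex.ofReal_injective
  push_cast
  rw [← hbeta, Complex.betaIntegral, ← intervalIntegral.integral_ofReal]
  refine intervalIntegral.integral_congr fun t ht => ?_
  rw [Set.uIcc_of_le zero_le_one] at ht
  simp only [Complex.ofReal_mul, Complex.ofReal_cpow ht.1, add_sub_cancel_right,
    Complex.cpow_natCast]
  push_cast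
  rfl

lemma integrableOn_rpow_mul_of_continuousOn (hz : 0 < z) {g : ℝ → ℝ}
    (hg : ContinuousOn g (Set.Icc 0 1)) :
    IntegrableOn (fun t => t ^ (z - 1) * g t) (Set.Ioo 0 1) := by
  have hrpow : IntegrableOn (fun t : ℝ => t ^ (z - 1)) (Set.Icc 0 1) :=
    (integrableOn_Icc_iff_integrableOn_Ioc).2
      (intervalIntegral.intervalIntegrable_rpow' (by linarith)).1
  exact (hrpow.mul_continuousOn hg isCompact_Icc).mono_set Set.Ioo_subset_Icc_self

lemma integral_rpow_mul_pow_div_factorial (hz : 0 < z) (w : ℝ) (k : ℕ) :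
    ∫ t in Set.Ioo (0 : ℝ) 1, t ^ (z - 1) * ((w * (1 - t)) ^ k / k !) =
      w ^ k / ∏ i ∈ range (k + 1), (z + i) := by
  calc ∫ t in Set.Ioo (0 : ℝ) 1, t ^ (z - 1) * ((w * (1 - t)) ^ k / k !)
      = w ^ k / k ! * ∫ t in Set.Ioo (0 : ℝ) 1, t ^ (z - 1) * (1 - t) ^ k := by
        rw [← integral_const_mul]
        congr 1 with t
        rw [mul_pow]
        ring
    _ = w ^ k / ∏ i ∈ range (k + 1), (z + i) := by
        rw [integral_rpow_mul_one_sub_pow hz]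
        field_simp

lemma integral_rpow_mul_exp_mul_one_sub (hz : 0 < z) (w : ℝ) :
    ∫ t in Set.Ioo (0 : ℝ) 1, t ^ (z - 1) * exp (w * (1 - t)) =
      ∑' k : ℕ, w ^ k / ∏ i ∈ range (k + 1), (z + i) := by
  have hnorm (k : ℕ) : ∫ t in Set.Ioo (0 : ℝ) 1, ‖t ^ (z - 1) * ((w * (1 - t)) ^ k / k !)‖ =
      |w| ^ k / ∏ i ∈ range (k + 1), (z + i) := by
    rw [← integral_rpow_mul_pow_div_factorial hz |w| k]
    refine setIntegral_congr_fun measurableSet_Ioo fun t ht => ?_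
    simp only [norm_mul, norm_div, norm_pow, norm_eq_abs, Nat.abs_cast,
      abs_of_nonneg (rpow_nonneg ht.1.le _), abs_of_nonneg (sub_nonneg.2 ht.2.le)]
  have hsum := hasSum_integral_of_summable_integral_norm
    (F := fun k t => t ^ (z - 1) * ((w * (1 - t)) ^ k / k !))
    (fun k => integrableOn_rpow_mul_of_continuousOn hz (by fun_prop))
    ((summable_pow_div_prod_range_add hz |w|).congr fun k => (hnorm k).symm)
  simp only [integral_rpow_mul_pow_div_factorial hz] at hsum
  rw [hsum.tsum_eq]
  congr 1 with t
  rw [tsum_mul_left, exp_eq_exp_ℝ, (NormedSpace.expSeries_div_hasSum_exp _).tsum_eq]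

end

/-- For every real `z > 0` and every real `w`, the series
`Σ_{j=0}^∞ w^j / (z(z+1)⋯(z+j))` converges and
`∫_0^1 t^{z−1} e^{−wt} dt = e^{−w} · Σ_{j=0}^∞ w^j / (z(z+1)⋯(z+j))`. -/
theorem lower_incomplete_gamma_series (z : ℝ) (hz : 0 < z) (w : ℝ) :
    Summable (fun j : ℕ => w ^ j / ∏ i ∈ Finset.range (j + 1), (z + i)) ∧
    (∫ t in Set.Ioo (0 : ℝ) 1, t ^ (z - 1) * Real.exp (-w * t)) =
      Real.exp (-w) * ∑' j : ℕ, w ^ j / ∏ i ∈ Finset.range (j + 1), (z + i) := by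
  refine ⟨summable_pow_div_prod_range_add hz w, ?_⟩
  rw [← integral_rpow_mul_exp_mul_one_sub hz w, ← integral_const_mul]
  congr 1 with t
  rw [mul_left_comm, ← exp_add]
  ring_nf
end

section
/- Let a and D be positive real numbers. Then the function H(s) := 2 ζ(2s) a^{−s} + 2 a^{s−1} √π ζ(2s−1) Γ(s − 1/2) / (Γ(s) (D^{1/2}/2)^{2s−1}), defined for complex s near 1/2 with s ≠ 1/2, tends, as s → 1/2, to the limit (2/√a) · (γ + log(D^{1/2}/(8πa))), where γ is the Euler–Mascheroni constant. In particular, the simple poles at s = 1/2 of the two terms (coming from ζ(2s) and from Γ(s − 1/2)) cancel. -/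
open Real Filter Topology

/-!
`ζ(2s)` has a simple pole at `s = 1/2`, and writing `Γ(s - 1/2) = Γ(s + 1/2) / (s - 1/2)` exposes
the pole of the second term, with residue governed by `ζ(0) = -1/2`. Both singular parts combine
into `(u(s) + v(s)) / (s - 1/2)` with `u(s) = a^{-s}`, `v(s) = A(s) a^{s-1} c^{1-2s}`,
`c = √D/2`, `A = zetaGammaFactor` and `u(1/2) + v(1/2) = 0`, so the limit is
`2γ a^{-1/2} + u'(1/2) + v'(1/2)`. The derivatives come from `ζ'(0) = -log(2π)/2`, `Γ'(1) = -γ`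
and `Γ'(1/2) = -√π (γ + 2 log 2)`.
-/

theorem tendsto_mul_add_div_sub_of_hasDerivAt {𝕜 : Type*} [NontriviallyNormedField 𝕜]
    {f u v : 𝕜 → 𝕜} {z₀ α u' v' : 𝕜}
    (hf : Tendsto (fun s => f s - 1 / (s - z₀)) (𝓝[≠] z₀) (𝓝 α))
    (hu : HasDerivAt u u' z₀) (hv : HasDerivAt v v' z₀) (huv : u z₀ + v z₀ = 0) :
    Tendsto (fun s => f s * u s + v s / (s - z₀)) (𝓝[≠] z₀) (𝓝 (α * u z₀ + (u' + v'))) := by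
  have hslope : Tendsto (fun s => (u s + v s) / (s - z₀)) (𝓝[≠] z₀) (𝓝 (u' + v')) :=
    (hasDerivAt_iff_tendsto_slope.mp (hu.add hv)).congr fun s => by
      rw [slope_def_field, Pi.add_apply, Pi.add_apply, huv, sub_zero]
  refine ((hf.mul (hu.continuousAt.tendsto.mono_left nhdsWithin_le_nhds)).add hslope).congr' ?_
  filter_upwards [self_mem_nhdsWithin] with s hs
  have : s - z₀ ≠ 0 := sub_ne_zero.mpr hs
  field_simp
  ring

theorem tendsto_mul_riemannZeta_mul_sub_one_div {c z₀ : ℂ} (h : c * z₀ = 1) :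
    Tendsto (fun s => c * riemannZeta (c * s) - 1 / (s - z₀)) (𝓝[≠] z₀)
      (𝓝 (c * eulerMascheroniConstant)) := by
  have hc : c ≠ 0 := left_ne_zero_of_mul_eq_one h
  have hlin : Tendsto (fun s => c * s) (𝓝[≠] z₀) (𝓝[≠] 1) := by
    rw [← h]
    refine (continuous_const.mul continuous_id).continuousWithinAt.tendsto_nhdsWithin ?_
    exact fun s hs => (mul_right_injective₀ hc).ne hs
  refine ((tendsto_riemannZeta_sub_one_div.comp hlin).const_mul c).congr fun s => ?_
  have hpole : c * s - 1 = c * (s - z₀) := by rw [mul_sub, h]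
  rw [Function.comp_apply, hpole, mul_sub, one_div, mul_inv, mul_inv_cancel_left₀ hc, one_div]

theorem Complex.ofReal_sqrt_pi_ne_zero : (√π : ℂ) ≠ 0 :=
  Complex.ofReal_ne_zero.mpr (Real.sqrt_ne_zero'.mpr Real.pi_pos)

theorem Complex.Gamma_one_half_eq_sqrt : Complex.Gamma (1 / 2) = √π := by
  have := Complex.Gamma_ofReal (1 / 2)
  rw [Real.Gamma_one_half_eq] at this
  simpa using this

theorem hasDerivAt_riemannZeta_two_mul_sub_one :
    HasDerivAt (fun s : ℂ => riemannZeta (2 * s - 1)) (-Complex.log (2 * π)) (1 / 2) := by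
  have hζ : HasDerivAt riemannZeta (-Complex.log (2 * π) / 2) 0 :=
    deriv_riemannZeta_zero ▸ (differentiableAt_riemannZeta zero_ne_one).hasDerivAt
  have hlin : HasDerivAt (fun s : ℂ => 2 * s - 1) 2 (1 / 2) := by
    simpa using ((hasDerivAt_id (1 / 2 : ℂ)).const_mul 2).sub_const 1
  refine (hζ.comp_of_eq (1 / 2) hlin (by norm_num)).congr_deriv ?_
  ring

theorem hasDerivAt_Gamma_add_half_div_Gamma :
    HasDerivAt (fun s : ℂ => Complex.Gamma (s + 1 / 2) / Complex.Gamma s)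
      (2 * Complex.log 2 / √π) (1 / 2) := by
  have hnum : HasDerivAt (fun s : ℂ => Complex.Gamma (s + 1 / 2))
      (-eulerMascheroniConstant) (1 / 2) := by
    refine HasDerivAt.comp_add_const (1 / 2 : ℂ) (1 / 2) ?_
    rw [add_halves]
    exact Complex.hasDerivAt_Gamma_one
  have hπ := Complex.ofReal_sqrt_pi_ne_zero
  refine (hnum.div Complex.hasDerivAt_Gamma_one_half
    (Complex.Gamma_one_half_eq_sqrt ▸ hπ)).congr_deriv ?_
  rw [Complex.Gamma_one_half_eq_sqrt, show (1 / 2 + 1 / 2 : ℂ) = 1 by norm_num, Complex.Gamma_one]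
  field_simp
  ring

noncomputable def zetaGammaFactor (s : ℂ) : ℂ :=
  2 * √π * riemannZeta (2 * s - 1) * (Complex.Gamma (s + 1 / 2) / Complex.Gamma s)

theorem zetaGammaFactor_one_half : zetaGammaFactor (1 / 2) = -1 := by
  have hπ := Complex.ofReal_sqrt_pi_ne_zero
  rw [zetaGammaFactor, show 2 * (1 / 2 : ℂ) - 1 = 0 by norm_num, add_halves, riemannZeta_zero,
    Complex.Gamma_one, Complex.Gamma_one_half_eq_sqrt]
  field_simp

theorem hasDerivAt_zetaGammaFactor :
    HasDerivAt zetaGammaFactor (-2 * Real.log (4 * π) : ℝ) (1 / 2) := by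
  have hπ := Complex.ofReal_sqrt_pi_ne_zero
  have hlog : Real.log (4 * π) = Real.log 2 + Real.log (2 * π) := by
    rw [← Real.log_mul two_ne_zero (by positivity)]
    ring_nf
  refine ((hasDerivAt_riemannZeta_two_mul_sub_one.const_mul (2 * √π : ℂ)).mul
    hasDerivAt_Gamma_add_half_div_Gamma).congr_deriv ?_
  rw [show 2 * (1 / 2 : ℂ) - 1 = 0 by norm_num, add_halves, riemannZeta_zero,
    Complex.Gamma_one, Complex.Gamma_one_half_eq_sqrt, hlog]
  push_cast [Complex.ofReal_log two_pi_pos.le, Complex.ofNat_log]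
  field_simp
  ring

theorem zetaGammaFactor_mul_div_eq {s : ℂ} (hs : s ≠ 1 / 2) (a c : ℂ) :
    zetaGammaFactor s * (a ^ (s - 1) * c ^ (1 - 2 * s)) / (s - 1 / 2) =
      2 * a ^ (s - 1) * (√π : ℂ) * riemannZeta (2 * s - 1) * Complex.Gamma (s - 1 / 2) /
        (Complex.Gamma s * c ^ (2 * s - 1)) := by
  have hs_sub : s - 1 / 2 ≠ 0 := sub_ne_zero.mpr hs
  have h2s : 2 * s - 1 ≠ 0 := fun h => hs_sub (by linear_combination h / 2)
  have hΓ : Complex.Gamma (s + 1 / 2) = (s - 1 / 2) * Complex.Gamma (s - 1 / 2) := by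
    rw [← Complex.Gamma_add_one _ hs_sub]
    ring_nf
  rw [zetaGammaFactor, hΓ, show 1 - 2 * s = -(2 * s - 1) by ring, Complex.cpow_neg]
  field_simp

theorem hasDerivAt_cpow_sub_one_mul_cpow_one_sub_two_mul {a c : ℂ} (ha : a ≠ 0) (hc : c ≠ 0) :
    HasDerivAt (fun s : ℂ => a ^ (s - 1) * c ^ (1 - 2 * s))
      (a ^ (-(1 / 2) : ℂ) * (Complex.log a - 2 * Complex.log c)) (1 / 2) := by
  have ha' : HasDerivAt (fun s : ℂ => a ^ (s - 1))
      (a ^ (1 / 2 - 1 : ℂ) * Complex.log a * 1) (1 / 2) :=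
    ((hasDerivAt_id (1 / 2 : ℂ)).sub_const 1).const_cpow (Or.inl ha)
  have hc' : HasDerivAt (fun s : ℂ => c ^ (1 - 2 * s))
      (c ^ (1 - 2 * (1 / 2) : ℂ) * Complex.log c * -(2 * 1)) (1 / 2) :=
    (((hasDerivAt_id (1 / 2 : ℂ)).const_mul (2 : ℂ)).const_sub (1 : ℂ)).const_cpow (Or.inl hc)
  refine (ha'.mul hc').congr_deriv ?_
  rw [show (1 / 2 - 1 : ℂ) = -(1 / 2) by norm_num, show 1 - 2 * (1 / 2 : ℂ) = 0 by norm_num,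
    Complex.cpow_zero]
  ring

theorem Complex.ofReal_cpow_neg_one_half {x : ℝ} (hx : 0 ≤ x) :
    (x : ℂ) ^ (-(1 / 2) : ℂ) = ((√x)⁻¹ : ℝ) := by
  rw [Real.sqrt_eq_rpow, ← Real.rpow_neg hx, Complex.ofReal_cpow hx]
  push_cast
  ring_nf

/-- The two non-Bessel terms in the Chowla–Selberg expansion have a removable singularity at
`s = 1/2`: as `s → 1/2` (with `s ≠ 1/2`), the function
`H(s) = 2 ζ(2s) a^{−s} + 2 a^{s−1} √π ζ(2s−1) Γ(s−1/2) / (Γ(s) (D^{1/2}/2)^{2s−1})`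
tends to `(2/√a)(γ + log(D^{1/2}/(8πa)))`. -/
theorem chowla_selberg_main_term_limit (a D : ℝ) (ha : 0 < a) (hD : 0 < D) :
    Tendsto
      (fun s : ℂ =>
        2 * riemannZeta (2 * s) * (a : ℂ) ^ (-s) +
          2 * (a : ℂ) ^ (s - 1) * (Real.sqrt Real.pi : ℂ) * riemannZeta (2 * s - 1) *
            Complex.Gamma (s - 1 / 2) /
            (Complex.Gamma s * ((Real.sqrt D / 2 : ℝ) : ℂ) ^ (2 * s - 1)))
      (𝓝[≠] (1 / 2 : ℂ))
      (𝓝 (((2 / Real.sqrt a) *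
        (Real.eulerMascheroniConstant + Real.log (Real.sqrt D / (8 * Real.pi * a))) : ℝ) : ℂ)) := by
  set c : ℝ := √D / 2
  have hc : 0 < c := by positivity
  have hu : HasDerivAt (fun s : ℂ => (a : ℂ) ^ (-s))
      ((a : ℂ) ^ (-(1 / 2) : ℂ) * Complex.log a * -1) (1 / 2) :=
    (hasDerivAt_neg _).const_cpow (Or.inl (Complex.ofReal_ne_zero.mpr ha.ne'))
  have hv := hasDerivAt_zetaGammaFactor.mul (hasDerivAt_cpow_sub_one_mul_cpow_one_sub_two_mul
    (Complex.ofReal_ne_zero.mpr ha.ne') (Complex.ofReal_ne_zero.mpr hc.ne'))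
  have key := tendsto_mul_add_div_sub_of_hasDerivAt
    (tendsto_mul_riemannZeta_mul_sub_one_div (c := 2) (z₀ := 1 / 2) (by norm_num)) hu hv
    (by simp only [Pi.mul_apply, zetaGammaFactor_one_half]; norm_num)
  have hlog : Real.log (√D / (8 * π * a)) = Real.log c - Real.log (4 * π) - Real.log a := by
    rw [show √D / (8 * π * a) = c / (4 * π * a) by ring, Real.log_div hc.ne' (by positivity),
      Real.log_mul (by positivity) ha.ne']
    ring
  refine (key.congr' (eventually_nhdsWithin_of_forall fun s hs => ?_)).mono_right
    (le_of_eq (congrArg 𝓝 ?_))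
  · rw [Pi.mul_apply, zetaGammaFactor_mul_div_eq hs]
  · rw [zetaGammaFactor_one_half, show (1 / 2 - 1 : ℂ) = -(1 / 2) by norm_num,
      show (1 - 2 * (1 / 2) : ℂ) = 0 by norm_num, Complex.cpow_zero,
      Complex.ofReal_cpow_neg_one_half ha.le, ← Complex.ofReal_log ha.le,
      ← Complex.ofReal_log hc.le, hlog]
    push_cast
    ring
end

section
/- As n → ∞ through the positive integers, Σ_{a=1}^{n} Σ_{b=0}^{a} gcd(a,b) ∼ n² log n / (2 ζ(2)), i.e. the ratio of the two sides tends to 1; here ζ(2) = π²/6, so the right-hand side equals 3 n² log n / π². -/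
/-!
Since `gcd a b = ∑_{d ∣ a, d ∣ b} φ d`, counting the pairs `0 ≤ b ≤ a ≤ n` divisible by `d` gives
`∑_{d ≤ n} φ d · ⌊n/d⌋ (⌊n/d⌋ + 1) / 2`, which is `(n²/2) ∑_{d ≤ n} φ d / d² + O(n²)`.
Möbius inversion `φ = μ * id` rewrites `∑_{d ≤ n} φ d / d²` as `∑_{e ≤ n} μ e / e² · H_{⌊n/e⌋}`.
For fixed `e` the harmonic number `H_{⌊n/e⌋}` is `log n + O(1)`, and `|μ e / e²| ≤ 1/e²` is summable,
so dominated convergence gives `∑_{d ≤ n} φ d / d² ∼ log n · ∑ μ e / e² = log n / ζ(2)`.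
-/

open Filter Topology Finset ArithmeticFunction
open scoped ArithmeticFunction.Moebius LSeries.notation Nat

theorem Nat.sum_Ioc_gcd_eq_sum_totient_mul_div (a : ℕ) :
    ∑ b ∈ Ioc 0 a, a.gcd b = ∑ d ∈ a.divisors, φ d * (a / d) := by
  rcases Nat.eq_zero_or_pos a with rfl | ha
  · simp
  have hgcd (b : ℕ) : a.gcd b = ∑ d ∈ a.divisors, if d ∣ b then φ d else 0 := by
    rw [← sum_filter, ← Nat.sum_totient (a.gcd b)]
    congr 1
    ext d
    simp [Nat.dvd_gcd_iff, ha.ne']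
  simp_rw [hgcd, sum_comm (s := Ioc 0 a), ← sum_filter, sum_const, Nat.Ioc_filter_dvd_card_eq_div,
    smul_eq_mul, mul_comm]

theorem Nat.sum_Ioc_sum_Ioc_gcd (n : ℕ) :
    ∑ a ∈ Ioc 0 n, ∑ b ∈ Ioc 0 a, a.gcd b = ∑ d ∈ Ioc 0 n, φ d * ∑ k ∈ Ioc 0 (n / d), k := by
  let totient : ArithmeticFunction ℕ := ⟨φ, Nat.totient_zero⟩
  calc ∑ a ∈ Ioc 0 n, ∑ b ∈ Ioc 0 a, a.gcd b
      = ∑ a ∈ Ioc 0 n, (totient * ArithmeticFunction.id) a := by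
        refine sum_congr rfl fun a _ => ?_
        rw [mul_apply, Nat.sum_divisorsAntidiagonal (fun i j => totient i * ArithmeticFunction.id j),
          Nat.sum_Ioc_gcd_eq_sum_totient_mul_div]
        rfl
    _ = _ := sum_Ioc_mul_eq_sum_sum _ _ n

theorem Nat.sum_Icc_sum_range_gcd (n : ℕ) :
    ∑ a ∈ Icc 1 n, ∑ b ∈ range (a + 1), a.gcd b =
      ∑ a ∈ Ioc 0 n, a + ∑ d ∈ Ioc 0 n, φ d * ∑ k ∈ Ioc 0 (n / d), k := by
  rw [← Nat.sum_Ioc_sum_Ioc_gcd, ← sum_add_distrib, ← Icc_add_one_left_eq_Ioc, zero_add]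
  refine sum_congr rfl fun a _ => ?_
  rw [range_eq_Ico, sum_eq_sum_Ico_succ_bot (Nat.succ_pos a), Nat.gcd_zero_right,
    Nat.succ_eq_add_one, Ico_add_one_add_one_eq_Ioc]

theorem sum_Ioc_natCast (m : ℕ) : ∑ k ∈ Ioc 0 m, (k : ℝ) = m * (m + 1) / 2 := by
  induction m with
  | zero => simp
  | succ m ih => rw [sum_Ioc_succ_top (Nat.zero_le m), ih]; push_cast; ring

theorem Nat.abs_floor_mul_floor_add_one_sub_sq_le {x : ℝ} (hx : 0 ≤ x) :
    |(⌊x⌋₊ : ℝ) * (⌊x⌋₊ + 1) - x ^ 2| ≤ x + 1 := by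
  have h1 := Nat.floor_le hx
  have h2 := Nat.lt_floor_add_one x
  rw [abs_le]
  constructor <;> nlinarith

theorem abs_totient_mul_triangle_sub_le {n d : ℕ} (hd : d ∈ Ioc 0 n) :
    |(φ d : ℝ) * ((n / d : ℕ) * ((n / d : ℕ) + 1) / 2) - n ^ 2 / 2 * ((φ d : ℝ) / d ^ 2)| ≤
      (n : ℝ) := by
  obtain ⟨hd0, hdn⟩ := mem_Ioc.1 hd
  have hd0' : (0 : ℝ) < d := by exact_mod_cast hd0
  have hdn' : (d : ℝ) ≤ n := by exact_mod_cast hdn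
  have hφ : (φ d : ℝ) ≤ d := by exact_mod_cast Nat.totient_le d
  have hfloor := Nat.abs_floor_mul_floor_add_one_sub_sq_le (x := (n : ℝ) / d) (by positivity)
  rw [Nat.floor_div_eq_div] at hfloor
  calc _ = (φ d : ℝ) / 2 * |((n / d : ℕ) : ℝ) * ((n / d : ℕ) + 1) - ((n : ℝ) / d) ^ 2| := by
        rw [← abs_of_nonneg (by positivity : (0 : ℝ) ≤ φ d / 2), ← abs_mul]
        congr 1
        field_simp
    _ ≤ d / 2 * ((n : ℝ) / d + 1) := by gcongr
    _ = (n + d) / 2 := by field_simp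
    _ ≤ n := by linarith

theorem abs_sum_gcd_sub_sum_totient_div_sq_le (n : ℕ) :
    |∑ a ∈ Icc 1 n, ∑ b ∈ range (a + 1), (a.gcd b : ℝ) -
        n ^ 2 / 2 * ∑ d ∈ Ioc 0 n, (φ d : ℝ) / d ^ 2| ≤ 2 * (n : ℝ) ^ 2 := by
  have hS : ∑ a ∈ Icc 1 n, ∑ b ∈ range (a + 1), (a.gcd b : ℝ) =
      n * (n + 1) / 2 + ∑ d ∈ Ioc 0 n, (φ d : ℝ) * ((n / d : ℕ) * ((n / d : ℕ) + 1) / 2) := by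
    have := congrArg (Nat.cast (R := ℝ)) (Nat.sum_Icc_sum_range_gcd n)
    push_cast at this
    simp_rw [this, sum_Ioc_natCast]
  have hT : |(n : ℝ) * (n + 1) / 2| ≤ n ^ 2 := by
    rw [abs_of_nonneg (by positivity)]
    rcases Nat.eq_zero_or_pos n with rfl | hn
    · simp
    · have : (1 : ℝ) ≤ n := by exact_mod_cast hn
      nlinarith
  rw [hS, mul_sum, add_sub_assoc, ← sum_sub_distrib]
  calc _ ≤ |(n : ℝ) * (n + 1) / 2| + ∑ d ∈ Ioc 0 n,
        |(φ d : ℝ) * ((n / d : ℕ) * ((n / d : ℕ) + 1) / 2) - n ^ 2 / 2 * ((φ d : ℝ) / d ^ 2)| :=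
        (abs_add_le _ _).trans (add_le_add_right (abs_sum_le_sum_abs _ _) _)
    _ ≤ n ^ 2 + ∑ d ∈ Ioc 0 n, (n : ℝ) :=
        add_le_add hT (sum_le_sum fun d hd => abs_totient_mul_triangle_sub_le hd)
    _ = 2 * n ^ 2 := by
        rw [sum_const, Nat.card_Ioc, nsmul_eq_mul, Nat.sub_zero]
        ring

theorem Nat.totient_eq_sum_moebius_mul {R : Type*} [Ring R] (d : ℕ) :
    (φ d : R) = ∑ x ∈ d.divisorsAntidiagonal, (μ x.1 : R) * x.2 := by
  rcases Nat.eq_zero_or_pos d with rfl | hd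
  · simp
  refine ((sum_eq_iff_sum_mul_moebius_eq (f := fun i => (φ i : R)) (g := fun n => (n : R))).1
    (fun n _ => ?_) d hd).symm
  rw [← Nat.cast_sum, Nat.sum_totient]

theorem sum_Ioc_totient_div_sq_eq_sum_moebius_mul_harmonic (n : ℕ) :
    ∑ d ∈ Ioc 0 n, (φ d : ℝ) / d ^ 2 = ∑ e ∈ Ioc 0 n, (μ e : ℝ) / e ^ 2 * harmonic (n / e) := by
  let f : ArithmeticFunction ℝ := ⟨fun e => (μ e : ℝ) / e ^ 2, by simp⟩
  let g : ArithmeticFunction ℝ := ⟨fun k => (k : ℝ)⁻¹, by simp⟩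
  calc ∑ d ∈ Ioc 0 n, (φ d : ℝ) / d ^ 2 = ∑ d ∈ Ioc 0 n, (f * g) d := by
        refine sum_congr rfl fun d _ => ?_
        rw [Nat.totient_eq_sum_moebius_mul, sum_div, mul_apply]
        refine sum_congr rfl fun x hx => ?_
        rw [← (Nat.mem_divisorsAntidiagonal.1 hx).1]
        rcases eq_or_ne x.2 0 with h | h
        · simp [f, g, h]
        · simp only [f, g, coe_mk]
          push_cast
          field_simp
    _ = _ := by
        rw [sum_Ioc_mul_eq_sum_sum]
        refine sum_congr rfl fun e _ => ?_
        simp [f, g, harmonic_eq_sum_Icc, ← Icc_add_one_left_eq_Ioc]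

theorem harmonic_div_le_one_add_log (n e : ℕ) : (harmonic (n / e) : ℝ) ≤ 1 + Real.log n := by
  rcases Nat.eq_zero_or_pos (n / e) with h | h
  · rw [h, harmonic_zero, Rat.cast_zero]
    linarith [Real.log_natCast_nonneg n]
  · refine (harmonic_le_one_add_log _).trans ?_
    gcongr
    exact Nat.div_le_self n e

theorem log_sub_log_le_harmonic_div (n : ℕ) {e : ℕ} (he : 0 < e) :
    Real.log n - Real.log e ≤ harmonic (n / e) := by
  rcases Nat.eq_zero_or_pos n with rfl | hn
  · simpa using Real.log_natCast_nonneg e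
  rw [← Real.log_div (by positivity) (by positivity), ← Nat.floor_div_eq_div (K := ℝ)]
  exact log_le_harmonic_floor _ (by positivity)

theorem hasSum_moebius_div_sq :
    HasSum (fun e : ℕ => (μ e : ℝ) / e ^ 2) (6 / Real.pi ^ 2) := by
  have hsum : LSeriesSummable ↗μ 2 := LSeriesSummable_moebius_iff.2 (by norm_num)
  have hval : L ↗μ 2 = ((6 / Real.pi ^ 2 : ℝ) : ℂ) := by
    have h := LSeries_zeta_mul_Lseries_moebius (s := 2) (by norm_num)
    rw [LSeries_zeta_eq_riemannZeta (by norm_num), riemannZeta_two] at h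
    have hpi : (Real.pi : ℂ) ^ 2 ≠ 0 := by exact_mod_cast (pow_pos Real.pi_pos 2).ne'
    push_cast
    field_simp at h ⊢
    linear_combination h
  have hterm (e : ℕ) : LSeries.term ↗μ 2 e = (((μ e : ℝ) / e ^ 2 : ℝ) : ℂ) := by
    rcases eq_or_ne e 0 with rfl | he
    · simp
    · rw [LSeries.term_of_ne_zero he]
      push_cast
      rw [Complex.cpow_ofNat]
  have := hsum.LSeriesHasSum
  rw [hval, LSeriesHasSum, funext hterm] at this
  exact Complex.hasSum_ofReal.1 this

theorem tendsto_log_natCast_atTop : Tendsto (fun n : ℕ => Real.log n) atTop atTop :=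
  Real.tendsto_log_atTop.comp tendsto_natCast_atTop_atTop

theorem tendsto_harmonic_div_div_log {e : ℕ} (he : 0 < e) :
    Tendsto (fun n : ℕ => (harmonic (n / e) : ℝ) / Real.log n) atTop (𝓝 1) := by
  have hinv : Tendsto (fun n : ℕ => (Real.log n)⁻¹) atTop (𝓝 0) :=
    tendsto_log_natCast_atTop.inv_tendsto_atTop
  have hlower : Tendsto (fun n : ℕ => 1 - Real.log e * (Real.log n)⁻¹) atTop (𝓝 1) := by
    simpa using (hinv.const_mul (Real.log e)).const_sub 1
  have hupper : Tendsto (fun n : ℕ => 1 + (Real.log n)⁻¹) atTop (𝓝 1) := by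
    simpa using hinv.const_add 1
  refine tendsto_of_tendsto_of_tendsto_of_le_of_le' hlower hupper ?_ ?_ <;>
    filter_upwards [tendsto_log_natCast_atTop.eventually_gt_atTop 0] with n hn
  · rw [le_div_iff₀ hn]
    have := log_sub_log_le_harmonic_div n he
    field_simp
    linarith
  · rw [div_le_iff₀ hn]
    have := harmonic_div_le_one_add_log n e
    field_simp
    linarith

theorem tendsto_sum_totient_div_sq_div_log :
    Tendsto (fun n : ℕ => (∑ d ∈ Ioc 0 n, (φ d : ℝ) / d ^ 2) / Real.log n) atTop
      (𝓝 (6 / Real.pi ^ 2)) := by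
  have hsum (n : ℕ) : (∑ d ∈ Ioc 0 n, (φ d : ℝ) / d ^ 2) / Real.log n =
      ∑' e, (μ e : ℝ) / e ^ 2 * ((harmonic (n / e) : ℝ) / Real.log n) := by
    rw [sum_Ioc_totient_div_sq_eq_sum_moebius_mul_harmonic, sum_div, tsum_eq_sum (s := Ioc 0 n)]
    · exact sum_congr rfl fun e _ => mul_div_assoc _ _ _
    · intro e he
      rcases Nat.eq_zero_or_pos e with rfl | he0
      · simp
      · rw [Nat.div_eq_of_lt (by simpa [he0] using he)]
        simp
  simp_rw [hsum]
  rw [← hasSum_moebius_div_sq.tsum_eq]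
  refine tendsto_tsum_of_dominated_convergence (bound := fun e : ℕ => 2 * (1 / (e : ℝ) ^ 2))
    ((Real.summable_one_div_nat_pow.2 one_lt_two).mul_left 2) (fun e => ?_) ?_
  · rcases Nat.eq_zero_or_pos e with rfl | he
    · simp
    · simpa using (tendsto_harmonic_div_div_log he).const_mul ((μ e : ℝ) / e ^ 2)
  · filter_upwards [tendsto_log_natCast_atTop.eventually_ge_atTop 1] with n hn e
    have hH : (harmonic (n / e) : ℝ) / Real.log n ≤ 2 := by
      rw [div_le_iff₀ (by linarith)]
      linarith [harmonic_div_le_one_add_log n e]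
    have hH0 : (0 : ℝ) ≤ harmonic (n / e) := by rw [harmonic]; push_cast; positivity
    have hμ : |(μ e : ℝ)| ≤ 1 := by exact_mod_cast abs_moebius_le_one
    rw [Real.norm_eq_abs, abs_mul, abs_div, abs_pow, Nat.abs_cast,
      abs_of_nonneg (by positivity : (0 : ℝ) ≤ (harmonic (n / e) : ℝ) / Real.log n), mul_comm 2]
    gcongr

/-- As `n → ∞`, `Σ_{a=1}^{n} Σ_{b=0}^{a} gcd(a,b) ∼ n² log n / (2 ζ(2))`,
where `ζ(2) = π²/6`. -/
theorem gcd_sum_asymptotic :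
    Tendsto
      (fun n : ℕ =>
        (∑ a ∈ Finset.Icc 1 n, ∑ b ∈ Finset.range (a + 1), (Nat.gcd a b : ℝ)) /
          ((n : ℝ) ^ 2 * Real.log n / (2 * (Real.pi ^ 2 / 6))))
      atTop (𝓝 1) := by
  set S : ℕ → ℝ := fun n => ∑ a ∈ Icc 1 n, ∑ b ∈ range (a + 1), (a.gcd b : ℝ)
  set A : ℕ → ℝ := fun n => ∑ d ∈ Ioc 0 n, (φ d : ℝ) / d ^ 2
  have hpos : ∀ᶠ n : ℕ in atTop, (0 : ℝ) < n ∧ 0 < Real.log n := by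
    filter_upwards [tendsto_log_natCast_atTop.eventually_gt_atTop 0] with n hn
    refine ⟨Nat.cast_pos.2 (Nat.pos_of_ne_zero ?_), hn⟩
    rintro rfl
    simp at hn
  have herror :
      Tendsto (fun n => (S n - n ^ 2 / 2 * A n) / (n ^ 2 * Real.log n)) atTop (𝓝 0) := by
    refine squeeze_zero_norm' ?_
      (by simpa using tendsto_log_natCast_atTop.inv_tendsto_atTop.const_mul 2)
    filter_upwards [hpos] with n ⟨hn, hlogn⟩
    rw [Real.norm_eq_abs, abs_div, abs_of_pos (by positivity : (0 : ℝ) < n ^ 2 * Real.log n),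
      div_le_iff₀ (by positivity)]
    calc |S n - n ^ 2 / 2 * A n| ≤ 2 * (n : ℝ) ^ 2 := abs_sum_gcd_sub_sum_totient_div_sq_le n
      _ = 2 * (Real.log n)⁻¹ * (n ^ 2 * Real.log n) := by field_simp
  have hlim := (tendsto_sum_totient_div_sq_div_log.const_mul (Real.pi ^ 2 / 6)).add
    (herror.const_mul (Real.pi ^ 2 / 3))
  rw [mul_zero, add_zero, div_mul_div_cancel₀ (by positivity), div_self (by norm_num)] at hlim
  refine hlim.congr' ?_
  filter_upwards [hpos] with n ⟨hn, hlogn⟩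
  field_simp
  ring
end
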